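/- Let F(x,y) = Re ∫₀^x √(((u−x)² + y²)(u−1)/u) du and G(x,y) = −∫₀¹ y²·√(1−t²)·Im √(1 − 1/(x + i t y)) dt, and let Σ⁺ = { x + i y : y > 0 and F(x,y) + G(x,y) = 0 }. Then for all real x, y with 0 < x ≤ 1 and y > 0 one has F(x,y) + G(x,y) < 0; in particular Σ⁺ contains no point z with 0 < Re z ≤ 1. -/

import Mathlib

open Complex

/-- `F(x,y) = Re ∫₀^x √(((u-x)² + y²)(u-1)/u) du`, principal complex square root. -/
noncomputable def Ffun (x y : ℝ) : ℝ :=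
  (∫ u in (0 : ℝ)..x,
    ((((u : ℂ) - (x : ℂ)) ^ 2 + (y : ℂ) ^ 2) * ((u : ℂ) - 1) / (u : ℂ)) ^ (1/2 : ℂ)).re

/-- `G(x,y) = -∫₀¹ y²√(1-t²)·Im √(1 - 1/(x+ity)) dt`. -/
noncomputable def Gfun (x y : ℝ) : ℝ :=
  -∫ t in (0 : ℝ)..1, y ^ 2 * Real.sqrt (1 - t ^ 2) *
    (((1 : ℂ) - 1 / ((x : ℂ) + (t : ℂ) * (y : ℂ) * Complex.I)) ^ (1/2 : ℂ)).im

/-- The upper half-plane branch set `Σ⁺ = { x + iy : y > 0, F(x,y) + G(x,y) = 0 }`. -/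
def SigmaPlus : Set ℂ := {z : ℂ | 0 < z.im ∧ Ffun z.re z.im + Gfun z.re z.im = 0}

/-- Principal square root of a nonpositive real is purely imaginary. -/
lemma re_sqrt_of_nonpos {r : ℝ} (hr : r ≤ 0) : (((r : ℂ)) ^ (1/2 : ℂ)).re = 0 := by
  rcases eq_or_lt_of_le hr with h | h
  · subst h
    push_cast
    rw [Complex.zero_cpow (by norm_num : (1/2 : ℂ) ≠ 0)]
    simp
  · have hne : (r : ℂ) ≠ 0 := by
      simp only [ne_eq, Complex.ofReal_eq_zero]; linarith
    rw [Complex.cpow_def_of_ne_zero hne, Complex.exp_re]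
    have him : (Complex.log (r : ℂ) * (1/2 : ℂ)).im = Real.pi / 2 := by
      simp [Complex.log_im, Complex.arg_ofReal_of_neg h, Complex.mul_im, Complex.div_im,
        Complex.div_re]
      ring
    rw [him, Real.cos_pi_div_two, mul_zero]

/-- Principal square root of a point in the open upper half-plane has positive imaginary part. -/
lemma im_sqrt_pos {w : ℂ} (hw : 0 < w.im) : 0 < (w ^ (1/2 : ℂ)).im := by
  have hne : w ≠ 0 := by
    intro h; rw [h] at hw; simp at hw
  rw [Complex.cpow_def_of_ne_zero hne, Complex.exp_im]
  have him : (Complex.log w * (1/2 : ℂ)).im = w.arg / 2 := by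
    simp [Complex.log_im, Complex.mul_im, Complex.div_im, Complex.div_re]
    ring
  rw [him]
  have h1 : 0 < w.arg := by
    rcases lt_or_eq_of_le (Complex.arg_nonneg_iff.mpr hw.le) with h | h
    · exact h
    · exfalso
      have := (Complex.arg_eq_zero_iff.mp h.symm).2
      linarith
  have h2 : w.arg ≤ Real.pi := Complex.arg_le_pi w
  have : 0 < Real.sin (w.arg / 2) :=
    Real.sin_pos_of_pos_of_lt_pi (by linarith) (by
      have := Real.pi_pos; linarith)
  positivity

lemma Ffun_eq_zero {x y : ℝ} (hx : 0 < x) (hx1 : x ≤ 1) : Ffun x y = 0 := by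
  unfold Ffun
  rw [intervalIntegral.integral_of_le hx.le]
  set f : ℝ → ℂ := fun u =>
    ((((u : ℂ) - (x : ℂ)) ^ 2 + (y : ℂ) ^ 2) * ((u : ℂ) - 1) / (u : ℂ)) ^ (1/2 : ℂ) with hf
  have key : ∀ u ∈ Set.Ioc (0 : ℝ) x, (starRingEnd ℂ) (f u) = -f u := by
    intro u hu
    have hcast : (((u : ℂ) - (x : ℂ)) ^ 2 + (y : ℂ) ^ 2) * ((u : ℂ) - 1) / (u : ℂ)
        = ((((u - x) ^ 2 + y ^ 2) * (u - 1) / u : ℝ) : ℂ) := by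
      push_cast; ring
    have hr : ((u - x) ^ 2 + y ^ 2) * (u - 1) / u ≤ 0 := by
      apply div_nonpos_of_nonpos_of_nonneg _ hu.1.le
      apply mul_nonpos_of_nonneg_of_nonpos (by positivity)
      have : u ≤ 1 := le_trans hu.2 hx1
      linarith
    have hre : (f u).re = 0 := by
      rw [hf]; simp only; rw [hcast]; exact re_sqrt_of_nonpos hr
    apply Complex.ext
    · simp [hre]
    · simp
  have hconj : (starRingEnd ℂ) (∫ u in Set.Ioc (0:ℝ) x, f u) = -∫ u in Set.Ioc (0:ℝ) x, f u := by
    rw [← integral_conj]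
    rw [MeasureTheory.setIntegral_congr_fun measurableSet_Ioc key]
    exact MeasureTheory.integral_neg f
  have := congrArg Complex.re hconj
  simp only [Complex.conj_re, Complex.neg_re] at this
  linarith

lemma Gfun_neg {x y : ℝ} (hx : 0 < x) (hy : 0 < y) : Gfun x y < 0 := by
  unfold Gfun
  set g : ℝ → ℝ := fun t => y ^ 2 * Real.sqrt (1 - t ^ 2) *
    (((1 : ℂ) - 1 / ((x : ℂ) + (t : ℂ) * (y : ℂ) * Complex.I)) ^ (1/2 : ℂ)).im with hg
  have hz : ∀ t : ℝ, ((x : ℂ) + (t : ℂ) * (y : ℂ) * Complex.I) ≠ 0 := by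
    intro t h
    have := congrArg Complex.re h
    simp at this
    linarith
  have himw : ∀ t : ℝ, 0 < t →
      0 < ((1 : ℂ) - 1 / ((x : ℂ) + (t : ℂ) * (y : ℂ) * Complex.I)).im := by
    intro t ht
    set z : ℂ := (x : ℂ) + (t : ℂ) * (y : ℂ) * Complex.I with hzdef
    have him : ((1 : ℂ) - 1 / z).im = z.im / Complex.normSq z := by
      rw [sub_im, one_im, one_div, Complex.inv_im]
      ring
    rw [him]
    have hzim : z.im = t * y := by simp [hzdef]
    have : 0 < Complex.normSq z := Complex.normSq_pos.mpr (hz t)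
    rw [hzim]
    positivity
  have hwne : ∀ t : ℝ, 0 < t →
      ((1 : ℂ) - 1 / ((x : ℂ) + (t : ℂ) * (y : ℂ) * Complex.I)) ≠ 0 := by
    intro t ht h
    have := himw t ht
    rw [h] at this; simp at this
  -- continuity on Ioc 0 1
  have hwcont : Continuous (fun t : ℝ => (1 : ℂ) - 1 / ((x : ℂ) + (t : ℂ) * (y : ℂ) * Complex.I)) := by
    apply Continuous.sub continuous_const
    apply Continuous.div continuous_const
    · continuity
    · exact hz
  have hgcont : ∀ t : ℝ, 0 < t → ContinuousAt g t := by
    intro t ht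
    have h1 : ContinuousAt
        (fun u : ℝ => ((1 : ℂ) - 1 / ((x : ℂ) + (u : ℂ) * (y : ℂ) * Complex.I)) ^ (1/2 : ℂ)) t :=
      hwcont.continuousAt.cpow continuousAt_const
        (Complex.mem_slitPlane_iff.mpr (Or.inr (himw t ht).ne'))
    exact ((continuous_const.mul
      ((continuous_const.sub (continuous_pow 2)).sqrt)).continuousAt).mul
      (Complex.continuous_im.continuousAt.comp h1)
  -- integrability
  have hbound : ∀ t ∈ Set.Ioc (0:ℝ) 1, ‖g t‖ ≤ y ^ 2 * Real.sqrt (1 + 1/x) := by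
    intro t ht
    set w : ℂ := (1 : ℂ) - 1 / ((x : ℂ) + (t : ℂ) * (y : ℂ) * Complex.I) with hwdef
    set s : ℂ := w ^ (1/2 : ℂ) with hsdef
    have hw0 : w ≠ 0 := hwne t ht.1
    have hs2 : s * s = w := by
      rw [hsdef, ← Complex.cpow_add _ _ hw0]
      norm_num
    have habsz : x ≤ ‖((x : ℂ) + (t : ℂ) * (y : ℂ) * Complex.I)‖ := by
      have hre : ((x : ℂ) + (t : ℂ) * (y : ℂ) * Complex.I).re = x := by simp
      calc x = |((x : ℂ) + (t : ℂ) * (y : ℂ) * Complex.I).re| := by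
            rw [hre, abs_of_pos hx]
        _ ≤ _ := Complex.abs_re_le_norm _
    have habsw : ‖w‖ ≤ 1 + 1/x := by
      have htri : ‖w‖
          ≤ ‖(1 : ℂ)‖ + ‖(1 / ((x : ℂ) + (t : ℂ) * (y : ℂ) * Complex.I))‖ := by
        rw [hwdef]
        simpa using
          norm_sub_le (1 : ℂ) (1 / ((x : ℂ) + (t : ℂ) * (y : ℂ) * Complex.I))
      refine htri.trans ?_
      simp only [norm_one, norm_div]
      have : 1 / ‖((x : ℂ) + (t : ℂ) * (y : ℂ) * Complex.I)‖ ≤ 1 / x :=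
        one_div_le_one_div_of_le hx habsz
      linarith
    have habss : ‖s‖ ≤ Real.sqrt (1 + 1/x) := by
      apply Real.le_sqrt_of_sq_le
      calc ‖s‖ ^ 2 = ‖s * s‖ := by rw [norm_mul]; ring
        _ = ‖w‖ := by rw [hs2]
        _ ≤ 1 + 1/x := habsw
    have hims : |s.im| ≤ ‖s‖ := Complex.abs_im_le_norm s
    have hsqrt1 : Real.sqrt (1 - t ^ 2) ≤ 1 := by
      rw [Real.sqrt_le_one]; nlinarith [ht.1]
    have hnorm : ‖g t‖ = y ^ 2 * Real.sqrt (1 - t ^ 2) * |s.im| := by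
      rw [hg]
      simp only [Real.norm_eq_abs, abs_mul]
      rw [_root_.abs_of_nonneg (by positivity : (0:ℝ) ≤ y ^ 2),
        _root_.abs_of_nonneg (Real.sqrt_nonneg _)]
    rw [hnorm]
    calc y ^ 2 * Real.sqrt (1 - t ^ 2) * |s.im|
        ≤ y ^ 2 * 1 * Real.sqrt (1 + 1/x) := by
          gcongr
          exact hims.trans habss
      _ = y ^ 2 * Real.sqrt (1 + 1/x) := by ring
  have hint : IntervalIntegrable g MeasureTheory.volume 0 1 := by
    rw [intervalIntegrable_iff_integrableOn_Ioc_of_le (by norm_num : (0:ℝ) ≤ 1)]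
    have hmeas : MeasureTheory.AEStronglyMeasurable g
        (MeasureTheory.volume.restrict (Set.Ioc (0:ℝ) 1)) := by
      apply ContinuousOn.aestronglyMeasurable _ measurableSet_Ioc
      intro t ht
      exact (hgcont t ht.1).continuousWithinAt
    apply MeasureTheory.Integrable.mono'
      ((MeasureTheory.integrableOn_const_iff).mpr (Or.inr (by simp)) :
        MeasureTheory.IntegrableOn (fun _ : ℝ => y ^ 2 * Real.sqrt (1 + 1/x)) (Set.Ioc 0 1) _)
      hmeas
    rw [MeasureTheory.ae_restrict_iff' measurableSet_Ioc]
    filter_upwards with t ht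
    exact hbound t ht
  have hpos : ∀ t ∈ Set.Ioo (0:ℝ) 1, 0 < g t := by
    intro t ht
    rw [hg]
    have h1 : 0 < Real.sqrt (1 - t ^ 2) := by
      apply Real.sqrt_pos.mpr; nlinarith [ht.1, ht.2]
    have h2 := im_sqrt_pos (himw t ht.1)
    positivity
  have : 0 < ∫ t in (0:ℝ)..1, g t :=
    intervalIntegral.intervalIntegral_pos_of_pos_on hint hpos (by norm_num)
  linarith

theorem stmt_7 :
    (∀ x y : ℝ, 0 < x → x ≤ 1 → 0 < y → Ffun x y + Gfun x y < 0)
    ∧ (∀ z ∈ SigmaPlus, ¬(0 < z.re ∧ z.re ≤ 1)) := by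
  have main : ∀ x y : ℝ, 0 < x → x ≤ 1 → 0 < y → Ffun x y + Gfun x y < 0 := by
    intro x y hx hx1 hy
    rw [Ffun_eq_zero hx hx1, zero_add]
    exact Gfun_neg hx hy
  refine ⟨main, ?_⟩
  rintro z ⟨hz1, hz2⟩ ⟨h1, h2⟩
  exact absurd hz2 (ne_of_lt (main z.re z.im h1 h2 hz1))
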